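/- For all N ≥ 3 and all s ∈ (0,1), |π_N(s)| ≤ |π(s)| + 1, where π(s) = 1 + ln s and π_N = Π_N' with Π_N the fourth-order Taylor regularization of s·ln s at 1/N. -/

import Mathlib

/-- π_N = Π_N', the derivative of the fourth-order Taylor regularization of
Π(s) = s ln s at 1/N. -/
noncomputable def piN (N : ℕ) (s : ℝ) : ℝ :=
  if (1 : ℝ) / (N : ℝ) ≤ s then 1 + Real.log s
  else 1 + Real.log (1 / (N : ℝ))
    + (N : ℝ) * (s - 1 / (N : ℝ))
    - ((N : ℝ)^2 / 2) * (s - 1 / (N : ℝ))^2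
    + ((N : ℝ)^3 / 3) * (s - 1 / (N : ℝ))^3

/-!
Above `1/N` the two functions agree. Below it, put `x = N s - 1 ∈ (-1, 0)`, so that
`π_N(s) = 1 - ln N + x - x²/2 + x³/3` and `π(s) = 1 - ln N + ln (1 + x)`.
The cubic `x - x²/2 + x³/3` is nonpositive and, since `x²/2 - x³/3 < 1`, at least `x - 1 ≥ ln (1 + x) - 1`.
Hence `π(s) - 1 ≤ π_N(s) ≤ 1 - ln N < 0` as soon as `N ≥ 3 > e`, and `|π_N(s)| = -π_N(s) ≤ |π(s)| + 1`.
-/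

open Real

theorem piN_of_le {N : ℕ} {s : ℝ} (h : 1 / (N : ℝ) ≤ s) : piN N s = 1 + log s :=
  if_pos h

theorem piN_of_lt {N : ℕ} {s : ℝ} (hN : 0 < N) (h : s < 1 / (N : ℝ)) :
    piN N s = 1 - log N + ((N * s - 1) - (N * s - 1) ^ 2 / 2 + (N * s - 1) ^ 3 / 3) := by
  have hN' : (N : ℝ) ≠ 0 := by positivity
  rw [piN, if_neg h.not_ge, one_div, log_inv]
  field_simp
  ring

theorem piN_nonpos_of_lt {N : ℕ} {s : ℝ} (hN : 3 ≤ N) (h : s < 1 / (N : ℝ)) : piN N s ≤ 0 := by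
  have hN3 : (3 : ℝ) ≤ N := by exact_mod_cast hN
  have hx : (N : ℝ) * s - 1 < 0 := by
    rw [lt_div_iff₀' (by positivity)] at h
    linarith
  have hlogN : 1 < log N := by
    linarith [log_three_gt_d9, log_le_log (by norm_num) hN3]
  rw [piN_of_lt (by omega) h]
  nlinarith [sq_nonneg ((N : ℝ) * s - 1)]

theorem log_le_piN_of_lt {N : ℕ} {s : ℝ} (hN : 0 < N) (hs : 0 < s) (h : s < 1 / (N : ℝ)) :
    log s ≤ piN N s := by
  have hNpos : (0 : ℝ) < N := by exact_mod_cast hN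
  have hx : (N : ℝ) * s - 1 < 0 := by
    rw [lt_div_iff₀' hNpos] at h
    linarith
  have hx' : 0 < (N : ℝ) * s := by positivity
  have hlog : log s ≤ (N * s - 1) - log N := by
    have := log_le_sub_one_of_pos hx'
    rw [log_mul hNpos.ne' hs.ne'] at this
    linarith
  rw [piN_of_lt hN h]
  nlinarith [sq_nonneg ((N : ℝ) * s - 1), mul_pos hx' hx']

/-- For N ≥ 3 and s ∈ (0,1), |π_N(s)| ≤ |π(s)| + 1 with π(s) = 1 + ln s. -/
theorem stmt_10 :
    ∀ N : ℕ, 3 ≤ N → ∀ s ∈ Set.Ioo (0 : ℝ) 1,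
      |piN N s| ≤ |1 + Real.log s| + 1 := by
  intro N hN s ⟨hs0, _⟩
  rcases le_or_gt (1 / (N : ℝ)) s with h | h
  · rw [piN_of_le h]
    linarith
  · rw [abs_of_nonpos (piN_nonpos_of_lt hN h)]
    linarith [log_le_piN_of_lt (by omega) hs0 h, neg_abs_le (1 + log s)]
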